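/- arXiv:1010.2603 — 4 statements merged into one kernel-verified Lean document; each statement's English description precedes it below -/
import Mathlib

section
/- If x, y, z are coprime integers satisfying x^2 + y^3 = z^10 with y odd, then there exist coprime odd integers u, v such that x + z^5 = u^3, x - z^5 = v^3, and 2*z^5 = u^3 - v^3. -/
theorem case_y_odd (x y z : ℤ) (hxy : IsCoprime x y) (hyz : IsCoprime y z)
    (hxz : IsCoprime x z) (heq : x ^ 2 + y ^ 3 = z ^ 10) (hy : Odd y) :
    ∃ u v : ℤ, IsCoprime u v ∧ Odd u ∧ Odd v ∧
      x + z ^ 5 = u ^ 3 ∧ x - z ^ 5 = v ^ 3 ∧ 2 * z ^ 5 = u ^ 3 - v ^ 3 := by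
  set a : ℤ := x + z ^ 5 with ha
  set b : ℤ := z ^ 5 - x with hb
  have hmul : a * b = y ^ 3 := by rw [ha, hb]; ring_nf; linarith [heq]
  have hodd : Odd (a * b) := by rw [hmul]; exact hy.pow
  rw [Int.odd_mul] at hodd
  obtain ⟨hoa, hob⟩ := hodd
  -- coprimality of a and 2
  have ha2 : IsCoprime a 2 := by
    obtain ⟨k, hk⟩ := hoa
    exact ⟨1, -k, by omega⟩
  -- coprimality of a and z
  have haz : IsCoprime a z := by
    have := hxz.add_mul_left_left (z ^ 4)
    have h5 : x + z * z ^ 4 = a := by rw [ha]; ring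
    rwa [h5] at this
  have hA : IsCoprime a (2 * z ^ 5) := ha2.mul_right (haz.pow_right)
  have hab : IsCoprime a b := by
    have := hA.add_mul_left_right (-1)
    have h6 : 2 * z ^ 5 + a * (-1) = b := by rw [ha, hb]; ring
    rwa [h6] at this
  obtain ⟨u, hu⟩ := Int.eq_pow_of_mul_eq_pow_odd_left hab ⟨1, by norm_num⟩ hmul
  obtain ⟨d, hd⟩ := Int.eq_pow_of_mul_eq_pow_odd_right hab ⟨1, by norm_num⟩ hmul
  refine ⟨u, -d, ?_, ?_, ?_, hu, ?_, ?_⟩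
  · have h1 : IsCoprime (u ^ 3) ((-d) ^ 3) := by
      have : (-d) ^ 3 = -b := by rw [hd]; ring
      rw [← hu, this]
      exact hab.neg_right
    exact IsCoprime.of_isCoprime_of_dvd_left
      (IsCoprime.of_isCoprime_of_dvd_right h1 (dvd_pow_self _ (by norm_num)))
      (dvd_pow_self _ (by norm_num))
  · rw [hu, Int.odd_pow] at hoa; exact hoa.resolve_right (by norm_num)
  · rw [hd, Int.odd_pow] at hob
    exact odd_neg.mpr (hob.resolve_right (by norm_num))
  · have : x - z ^ 5 = -b := by rw [hb]; ring
    rw [this, hd]; ring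
  · have h7 : (-d) ^ 3 = -b := by rw [hd]; ring
    rw [← hu, h7, ha, hb]; ring
end

section
/- Let u, v be coprime integers with 2*z^5 = u^3 - v^3 for some integer z not divisible by 3, with u, v odd. Then there exist coprime integers a, b with z = a*b, u - v = 2*a^5, and u^2 + u*v + v^2 = b^5. -/
/-!
Since `u³ - v³` is even, so is `u - v`; writing `u - v = 2 d` and `s = u² + uv + v²` gives
`d s = z⁵`. As `s = (u - v)² + 3uv`, a common prime factor of `u - v` and `s` divides `3uv`;
coprimality of `u, v` rules out primes dividing `uv`, and `3 ∤ z` rules out `3`. Hence `d` and `s`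
are coprime, and since `5` is odd, unique factorization in `ℤ` makes each of them a fifth power,
with no sign to track.
-/

theorem isCoprime_sub_sq_add_mul_add_sq {R : Type*} [CommRing R] {u v : R} (huv : IsCoprime u v)
    (h3 : IsCoprime (u - v) 3) : IsCoprime (u - v) (u ^ 2 + u * v + v ^ 2) := by
  have hu : IsCoprime (u - v) u := by
    simpa [sub_eq_neg_add] using huv.symm.neg_left.add_mul_left_left 1
  have hv : IsCoprime (u - v) v := by
    simpa [sub_eq_add_neg] using huv.add_mul_left_left (-1)
  convert (h3.mul_right (hu.mul_right hv)).add_mul_left_right (u - v) using 1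
  ring

theorem Int.exists_isCoprime_of_mul_eq_pow_odd {a b c : ℤ} (hab : IsCoprime a b) {k : ℕ}
    (hk : Odd k) (h : a * b = c ^ k) :
    ∃ x y : ℤ, IsCoprime x y ∧ c = x * y ∧ a = x ^ k ∧ b = y ^ k := by
  obtain ⟨⟨x, rfl⟩, ⟨y, rfl⟩⟩ := Int.eq_pow_of_mul_eq_pow_odd hab hk h
  have hk0 : 0 < k := hk.pos
  refine ⟨x, y, (IsCoprime.pow_iff hk0 hk0).mp hab, ?_, rfl, rfl⟩
  exact (hk.strictMono_pow (R := ℤ)).injective (by simpa [mul_pow] using h.symm)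

theorem fifth_power_extraction_general (u v z : ℤ) (huv : IsCoprime u v)
    (hz3 : ¬ (3 : ℤ) ∣ z) (heq : 2 * z ^ 5 = u ^ 3 - v ^ 3) :
    ∃ a b : ℤ, IsCoprime a b ∧ z = a * b ∧ u - v = 2 * a ^ 5 ∧
      u ^ 2 + u * v + v ^ 2 = b ^ 5 := by
  have hsub_even : Even (u - v) := by
    have h : Even (u ^ 3 - v ^ 3) := ⟨z ^ 5, by rw [← heq]; ring⟩
    rwa [Int.even_sub, Int.even_pow' three_ne_zero, Int.even_pow' three_ne_zero,
      ← Int.even_sub] at h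
  obtain ⟨d, hd⟩ := hsub_even.two_dvd
  have hds : d * (u ^ 2 + u * v + v ^ 2) = z ^ 5 := mul_left_cancel₀ two_ne_zero <| by
    linear_combination -(u ^ 2 + u * v + v ^ 2) * hd - heq
  have h3 : IsCoprime (u - v) 3 := by
    rw [isCoprime_comm, Irreducible.coprime_iff_not_dvd Int.prime_three.irreducible]
    intro h
    have h3z : (3 : ℤ) ∣ 2 * z ^ 5 := h.trans ⟨u ^ 2 + u * v + v ^ 2, by rw [heq]; ring⟩
    rcases Int.prime_three.dvd_mul.mp h3z with h32 | h3z5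
    · exact absurd h32 (by decide)
    · exact hz3 (Int.prime_three.dvd_of_dvd_pow h3z5)
  obtain ⟨a, b, hab, rfl, rfl, hb⟩ := Int.exists_isCoprime_of_mul_eq_pow_odd
    (hd ▸ isCoprime_sub_sq_add_mul_add_sq huv h3).of_mul_left_right (by decide) hds
  exact ⟨a, b, hab, rfl, hd, hb⟩

theorem fifth_power_extraction (u v z : ℤ) (huv : IsCoprime u v) (hu : Odd u) (hv : Odd v)
    (hz3 : ¬ (3 : ℤ) ∣ z) (heq : 2 * z ^ 5 = u ^ 3 - v ^ 3) :
    ∃ a b : ℤ, IsCoprime a b ∧ z = a * b ∧ u - v = 2 * a ^ 5 ∧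
      u ^ 2 + u * v + v ^ 2 = b ^ 5 :=
  fifth_power_extraction_general u v z huv hz3 heq
end

section
/- If x, y, z are coprime integers with x^2 + y^3 = z^10, y even, and x ≡ z^5 (mod 4), then there exist coprime integers u, v with u odd, z odd, y = -2*u*v, x + z^5 = 2*u^3, x - z^5 = 4*v^3, and u^3 - 2*v^3 = z^5. -/
/-!
Writing `x - z⁵ = 4v` and `x + z⁵ = 2u`, coprimality of `x` and `z` makes `u`, `v` coprime and
`u` odd. Then `8uv = x² - z¹⁰ = -y³ = 8(-w)³` for `y = 2w`, so the coprime factors `u`, `v` of a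
cube are themselves cubes.
-/

theorem Int.exists_add_eq_two_mul_sub_eq_four_mul_of_modEq_four {a b : ℤ} (hab : IsCoprime a b)
    (h : a ≡ b [ZMOD 4]) :
    ∃ u v : ℤ, IsCoprime u v ∧ Odd u ∧ a + b = 2 * u ∧ a - b = 4 * v := by
  obtain ⟨v, hv⟩ := h.symm.dvd
  obtain ⟨s, t, hst⟩ := hab
  have hb : b = (b + 2 * v) - 2 * v := by ring
  have ha : a = (b + 2 * v) + 2 * v := by linarith
  rw [ha, hb] at hst
  refine ⟨b + 2 * v, v, ⟨s + t, 2 * (s - t), by linear_combination hst⟩,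
    Int.isCoprime_two_right.mp ⟨s + t, (s - t) * v, by linear_combination hst⟩, by linarith, hv⟩

theorem case_y_even_general (x y z : ℤ)
    (hxz : IsCoprime x z) (heq : x ^ 2 + y ^ 3 = z ^ 10) (hy : Even y)
    (hmod : x ≡ z ^ 5 [ZMOD 4]) :
    ∃ u v : ℤ, IsCoprime u v ∧ Odd u ∧ Odd z ∧ y = -2 * u * v ∧
      x + z ^ 5 = 2 * u ^ 3 ∧ x - z ^ 5 = 4 * v ^ 3 ∧ u ^ 3 - 2 * v ^ 3 = z ^ 5 := by
  obtain ⟨u, v, huv, hu, hplus, hminus⟩ :=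
    Int.exists_add_eq_two_mul_sub_eq_four_mul_of_modEq_four hxz.pow_right hmod
  obtain ⟨w, rfl⟩ := hy
  have hcube : u * v = (-w) ^ 3 := by
    have : 8 * (u * v) = 8 * (-w) ^ 3 := by
      linear_combination heq - (x - z ^ 5) * hplus - 2 * u * hminus
    exact mul_left_cancel₀ (by norm_num) this
  obtain ⟨⟨p, rfl⟩, ⟨q, rfl⟩⟩ := Int.eq_pow_of_mul_eq_pow_odd huv (by decide) hcube
  have hpq : p * q = -w := (Odd.pow_inj (n := 3) (by decide)).mp (by rw [mul_pow, hcube])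
  have hz : z ^ 5 = p ^ 3 - 2 * q ^ 3 := by linarith
  have hz_odd : Odd z := (Int.odd_pow' (n := 5) (by norm_num)).mp <| by
    rw [hz]
    exact hu.sub_even (even_two_mul _)
  exact ⟨p, q, (IsCoprime.pow_iff (m := 3) (n := 3) (by norm_num) (by norm_num)).mp huv,
    (Int.odd_pow' (by norm_num)).mp hu, hz_odd, by linear_combination 2 * hpq, hplus, hminus,
    hz.symm⟩

theorem case_y_even (x y z : ℤ) (hxy : IsCoprime x y) (hyz : IsCoprime y z)
    (hxz : IsCoprime x z) (heq : x ^ 2 + y ^ 3 = z ^ 10) (hy : Even y)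
    (hmod : x ≡ z ^ 5 [ZMOD 4]) :
    ∃ u v : ℤ, IsCoprime u v ∧ Odd u ∧ Odd z ∧ y = -2 * u * v ∧
      x + z ^ 5 = 2 * u ^ 3 ∧ x - z ^ 5 = 4 * v ^ 3 ∧ u ^ 3 - 2 * v ^ 3 = z ^ 5 :=
  case_y_even_general x y z hxz heq hy hmod
end

section
/- If u, v are coprime odd integers, z an integer with 3 | z, z odd, and 2*z^5 = u^3 - v^3, then there exist coprime integers a, b with z = 3*a*b, u - v = 2*3^4*a^5, and u^2 + u*v + v^2 = 3*b^5. -/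
theorem fifth_power_extraction_three_dvd (u v z : ℤ) (huv : IsCoprime u v)
    (hu : Odd u) (hv : Odd v) (hz3 : (3 : ℤ) ∣ z) (hz : Odd z)
    (heq : 2 * z ^ 5 = u ^ 3 - v ^ 3) :
    ∃ a b : ℤ, IsCoprime a b ∧ z = 3 * a * b ∧ u - v = 2 * 3 ^ 4 * a ^ 5 ∧
      u ^ 2 + u * v + v ^ 2 = 3 * b ^ 5 := by
  have hp3 : Prime (3 : ℤ) := Int.prime_three
  obtain ⟨z₁, hz₁⟩ := hz3
  -- 3 ∣ u - v
  have h3g : (3 : ℤ) ∣ u - v := by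
    have h3 : (3 : ℤ) ∣ (u - v) * (u ^ 2 + u * v + v ^ 2) := by
      have : (u - v) * (u ^ 2 + u * v + v ^ 2) = 2 * z ^ 5 := by linarith [heq, (by ring : (u-v)*(u^2+u*v+v^2) = u^3 - v^3)]
      rw [this, hz₁]
      exact ⟨2 * (3 * z₁) ^ 4 * z₁, by ring⟩
    rcases hp3.dvd_mul.mp h3 with h | h
    · exact h
    · obtain ⟨w, hw⟩ := h
      have : (3 : ℤ) ∣ (u - v) ^ 2 := ⟨w - u * v, by linarith [hw, (by ring : (u-v)^2 = (u^2+u*v+v^2) - 3*(u*v))]⟩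
      exact hp3.dvd_of_dvd_pow this
  obtain ⟨t, ht⟩ := h3g
  -- 3 does not divide u*v
  have h3uv : ¬ (3 : ℤ) ∣ u * v := by
    intro h
    rcases hp3.dvd_mul.mp h with h | h
    · have hv3 : (3:ℤ) ∣ v := by
        have : v = u - 3 * t := by linarith [ht]
        rw [this]; exact dvd_sub h ⟨t, rfl⟩
      exact hp3.not_unit (huv.isUnit_of_dvd' h hv3)
    · have hu3 : (3:ℤ) ∣ u := by
        have : u = v + 3 * t := by linarith [ht]
        rw [this]; exact dvd_add h ⟨t, rfl⟩
      exact hp3.not_unit (huv.isUnit_of_dvd' hu3 h)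
  -- s = 3 * d with d = (u-v)*t + u*v
  set d : ℤ := (u - v) * t + u * v with hd
  have hsd : u ^ 2 + u * v + v ^ 2 = 3 * d := by
    have h1 : (u - v)^2 = (u-v)*(3*t) := by rw [← ht]; ring
    nlinarith [h1]
  have h3d : ¬ (3 : ℤ) ∣ d := by
    intro h
    apply h3uv
    have : u * v = d - (3*t) * t := by rw [hd, ht]; ring
    rw [this]
    exact dvd_sub h ⟨t * t, by ring⟩
  -- u - v even
  obtain ⟨g', hg'⟩ : (2 : ℤ) ∣ u - v := by
    obtain ⟨m, hm⟩ := hu; obtain ⟨n, hn⟩ := hv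
    exact ⟨m - n, by omega⟩
  -- key equation
  have hkey : 3 ^ 4 * z₁ ^ 5 = g' * d := by
    have h6 : (6:ℤ) * (3 ^ 4 * z₁ ^ 5) = 6 * (g' * d) := by
      have e1 : (u - v) * (u ^ 2 + u * v + v ^ 2) = 2 * z ^ 5 := by
        linarith [heq, (by ring : (u-v)*(u^2+u*v+v^2) = u^3 - v^3)]
      rw [hg', hsd] at e1
      rw [hz₁] at e1
      linarith [e1, (by ring : 2 * (3*z₁) ^ 5 = 486 * z₁ ^ 5), (by ring : 2*g' * (3*d) = 6*(g'*d))]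
    exact mul_left_cancel₀ (by norm_num) h6
  -- coprimality of g' and d
  have hcop_uv_u : IsCoprime (u - v) u := by
    have := (huv.symm.neg_left).add_mul_left_left 1
    simpa [mul_one, ← sub_eq_neg_add] using this
  have hcop_uv_v : IsCoprime (u - v) v := by
    have := huv.add_mul_left_left (-1)
    simpa [mul_comm, ← sub_eq_add_neg] using this
  have hcop1 : IsCoprime (u - v) (u * v) := hcop_uv_u.mul_right hcop_uv_v
  have hcop2 : IsCoprime (u - v) d := by
    have := hcop1.add_mul_left_right t
    simpa [hd, add_comm, mul_comm] using this
  have hcopg'd : IsCoprime g' d :=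
    IsCoprime.of_isCoprime_of_dvd_left hcop2 ⟨2, by linarith [hg']⟩
  -- 3^4 ∣ g'
  have hcop3d : IsCoprime ((3:ℤ) ^ 4) d :=
    ((hp3.coprime_iff_not_dvd.mpr h3d)).pow_left
  obtain ⟨c, hc⟩ : (3:ℤ) ^ 4 ∣ g' := hcop3d.dvd_of_dvd_mul_right ⟨z₁ ^ 5, by linarith [hkey]⟩
  have hcd : c * d = z₁ ^ 5 := by
    have : (3:ℤ)^4 * (c * d) = 3^4 * z₁ ^ 5 := by rw [hkey, hc]; ring
    exact mul_left_cancel₀ (by norm_num) this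
  have hcopcd : IsCoprime c d :=
    IsCoprime.of_isCoprime_of_dvd_left hcopg'd ⟨3^4, by linarith [hc]⟩
  obtain ⟨⟨a, ha⟩, ⟨b, hb⟩⟩ := Int.eq_pow_of_mul_eq_pow_odd hcopcd ⟨2, rfl⟩ hcd
  norm_num at ha hb
  have hz₁ab : z₁ = a * b := by
    have h5 : z₁ ^ 5 = (a * b) ^ 5 := by rw [← hcd, ha, hb]; ring
    exact (Odd.strictMono_pow (R := ℤ) ⟨2, rfl⟩).injective h5
  refine ⟨a, b, ?_, ?_, ?_, ?_⟩
  · have : IsCoprime (a ^ 5) (b ^ 5) := by rwa [← ha, ← hb]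
    exact IsCoprime.of_isCoprime_of_dvd_left
      (IsCoprime.of_isCoprime_of_dvd_right this (dvd_pow_self b (by norm_num)))
      (dvd_pow_self a (by norm_num))
  · rw [hz₁, hz₁ab]; ring
  · rw [hg', hc, ha]; ring
  · rw [hsd, hb]
end
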